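/- Let N : ℕ → ℕ be defined by N(0) = 1 and, for k ≥ 1, N(k) = 1 + ∑_{i=1}^{k} i·N(k−i). Let p ≥ 3 be an odd natural number and let k = ⌊(p−1)/4⌋. Then N(k) is odd if and only if p is not congruent to 5 or 7 modulo 12. -/

import Mathlib

/-!
Reindexing the recurrence by `j = k - i` gives `N k = 1 + ∑_{j < k} (k - j) N j`, and
differencing consecutive terms yields `N (k + 1) = 2 N k + ∑_{j < k} N j`. Modulo 2 this
says that `N (k + 1)` has the parity of the partial sum `∑_{j < k} N j`, and a joint
induction shows that `N k` is even exactly when `k ≡ 1 (mod 3)`. Finally, for odd `p`,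
`⌊(p - 1) / 4⌋ ≡ 1 (mod 3)` exactly when `p ≡ 5` or `7 (mod 12)`.
-/

open Finset

lemma sum_Icc_mul_sub_eq_sum_range (N : ℕ → ℕ) (k : ℕ) :
    ∑ i ∈ Icc 1 k, i * N (k - i) = ∑ j ∈ range k, (k - j) * N j := by
  refine sum_nbij' (fun i => k - i) (fun j => k - j) ?_ ?_ ?_ ?_ ?_ <;> intro i hi <;>
    simp only [mem_Icc, mem_range] at hi ⊢
  · omega
  · omega
  · omega
  · omega
  · rw [Nat.sub_sub_self hi.2]

lemma sum_range_succ_sub_mul (N : ℕ → ℕ) (k : ℕ) :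
    ∑ j ∈ range (k + 1), (k + 1 - j) * N j =
      ∑ j ∈ range k, (k - j) * N j + ∑ j ∈ range (k + 1), N j := by
  have hsplit : ∀ j ∈ range (k + 1), (k + 1 - j) * N j = (k - j) * N j + N j := by
    intro j hj
    rw [mem_range] at hj
    rw [Nat.succ_sub (by omega), Nat.succ_mul]
  rw [sum_congr rfl hsplit, sum_add_distrib, sum_range_succ, Nat.sub_self, zero_mul, add_zero]

section Recurrence

variable {N : ℕ → ℕ} (hN0 : N 0 = 1)
  (hN : ∀ k, 1 ≤ k → N k = 1 + ∑ i ∈ Icc 1 k, i * N (k - i))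
include hN0 hN

lemma eq_one_add_sum_range_mul (k : ℕ) : N k = 1 + ∑ j ∈ range k, (k - j) * N j := by
  rcases Nat.eq_zero_or_pos k with rfl | hk
  · simp [hN0]
  · rw [hN k hk, sum_Icc_mul_sub_eq_sum_range]

lemma succ_eq_two_mul_add_sum_range (k : ℕ) :
    N (k + 1) = 2 * N k + ∑ j ∈ range k, N j := by
  have hk := eq_one_add_sum_range_mul hN0 hN k
  rw [eq_one_add_sum_range_mul hN0 hN (k + 1), sum_range_succ_sub_mul, sum_range_succ]
  omega

lemma mod_two_eq_and_sum_range_mod_two_eq (k : ℕ) :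
    N k % 2 = (if k % 3 = 1 then 0 else 1) ∧
      (∑ j ∈ range k, N j) % 2 = (if k % 3 = 0 then 0 else 1) := by
  induction k with
  | zero => simp [hN0]
  | succ k ih =>
    obtain ⟨hNk, hsum⟩ := ih
    rw [succ_eq_two_mul_add_sum_range hN0 hN, sum_range_succ]
    constructor <;> split_ifs at hNk hsum ⊢ <;> omega

lemma odd_iff_mod_three_ne_one (k : ℕ) : Odd (N k) ↔ k % 3 ≠ 1 := by
  rw [Nat.odd_iff, (mod_two_eq_and_sum_range_mod_two_eq hN0 hN k).1]
  split_ifs <;> simp_all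

end Recurrence

theorem stmt_9_general (N : ℕ → ℕ) (hN0 : N 0 = 1)
    (hN : ∀ k, 1 ≤ k → N k = 1 + ∑ i ∈ Finset.Icc 1 k, i * N (k - i))
    (p : ℕ) (hodd : Odd p) :
    Odd (N ((p - 1) / 4)) ↔ ¬(p % 12 = 5 ∨ p % 12 = 7) := by
  rw [odd_iff_mod_three_ne_one hN0 hN]
  have hp := Nat.odd_iff.mp hodd
  omega

theorem stmt_9 (N : ℕ → ℕ) (hN0 : N 0 = 1)
    (hN : ∀ k, 1 ≤ k → N k = 1 + ∑ i ∈ Finset.Icc 1 k, i * N (k - i))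
    (p : ℕ) (hp : 3 ≤ p) (hodd : Odd p) :
    Odd (N ((p - 1) / 4)) ↔ ¬(p % 12 = 5 ∨ p % 12 = 7) :=
  stmt_9_general N hN0 hN p hodd
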